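/- Discrete opacity formula: for a ray segment [t_i, t_{i+1}] on which g(t) = f(p(t)) is differentiable and decreasing (g' < 0), the opacity α_i = 1 - exp(-∫_{t_i}^{t_{i+1}} ρ(t)dt), with ρ(t) = -g'(t)φ_s(g(t))/Φ_s(g(t)), equals (Φ_s(g(t_i)) - Φ_s(g(t_{i+1}))) / Φ_s(g(t_i)). -/

import Mathlib

open Real Filter MeasureTheory

/-- The sigmoid function `Φ_s(x) = (1 + e^{-sx})⁻¹`. -/
noncomputable def Phi (s x : ℝ) : ℝ := (1 + Real.exp (-s * x))⁻¹

/-- The logistic density `φ_s(x) = s e^{-sx} / (1 + e^{-sx})²`. -/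
noncomputable def phi (s x : ℝ) : ℝ :=
  s * Real.exp (-s * x) / (1 + Real.exp (-s * x)) ^ 2

/-! The density `ρ = -(Φ_s ∘ g)' / (Φ_s ∘ g)` is minus the logarithmic derivative of
`Φ_s ∘ g`, so by the fundamental theorem of calculus `∫_{t_i}^{t_{i+1}} ρ` is
`log Φ_s(g(t_i)) - log Φ_s(g(t_{i+1}))`, and `1 - exp(-∫ρ) = 1 - Φ_s(g(t_{i+1})) / Φ_s(g(t_i))`. -/

theorem Phi_pos (s x : ℝ) : 0 < Phi s x := by
  unfold Phi; positivity

theorem hasDerivAt_Phi (s x : ℝ) : HasDerivAt (Phi s) (phi s x) x := by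
  have hlin : HasDerivAt (fun y : ℝ => -s * y) (-s) x := by
    simpa using (hasDerivAt_id x).const_mul (-s)
  have hden : 1 + exp (-s * x) ≠ 0 := by positivity
  refine ((hlin.exp.const_add 1).inv hden).congr_deriv ?_
  unfold phi
  ring

theorem continuous_phi (s : ℝ) : Continuous (phi s) := by
  unfold phi
  exact Continuous.div (by fun_prop) (by fun_prop) fun x => by positivity

theorem integral_deriv_div_eq_log_sub {f f' : ℝ → ℝ} {a b : ℝ}
    (hf : ∀ t ∈ Set.uIcc a b, HasDerivAt f (f' t) t)
    (hf' : ContinuousOn f' (Set.uIcc a b)) (hf0 : ∀ t ∈ Set.uIcc a b, f t ≠ 0) :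
    ∫ t in a..b, f' t / f t = log (f b) - log (f a) := by
  have hcont : ContinuousOn f (Set.uIcc a b) :=
    fun t ht => (hf t ht).continuousAt.continuousWithinAt
  exact intervalIntegral.integral_eq_sub_of_hasDerivAt (f := fun t => log (f t))
    (fun t ht => (hf t ht).log (hf0 t ht)) (hf'.div hcont hf0).intervalIntegrable

theorem discrete_opacity_formula_general (s ti ti1 : ℝ)
    (g g' : ℝ → ℝ) (hg : ∀ t, HasDerivAt g (g' t) t) (hg' : Continuous g') :
    1 - Real.exp (-(∫ t in ti..ti1, -g' t * phi s (g t) / Phi s (g t)))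
      = (Phi s (g ti) - Phi s (g ti1)) / Phi s (g ti) := by
  have hgc : Continuous g := continuous_iff_continuousAt.2 fun t => (hg t).continuousAt
  have hlog : ∫ t in ti..ti1, phi s (g t) * g' t / Phi s (g t)
      = log (Phi s (g ti1)) - log (Phi s (g ti)) :=
    integral_deriv_div_eq_log_sub (fun t _ => (hasDerivAt_Phi s (g t)).comp t (hg t))
      (((continuous_phi s).comp hgc).mul hg').continuousOn fun t _ => (Phi_pos s (g t)).ne'
  have hρ : (fun t => -g' t * phi s (g t) / Phi s (g t))
      = fun t => -(phi s (g t) * g' t / Phi s (g t)) := by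
    ext t; ring
  rw [hρ, intervalIntegral.integral_neg, hlog, neg_neg, exp_sub,
    exp_log (Phi_pos s _), exp_log (Phi_pos s _)]
  field_simp [(Phi_pos s (g ti)).ne']

/-- Discrete opacity formula: if `g` is differentiable and decreasing on
`[t_i, t_{i+1}]`, then
`α_i = 1 - exp(-∫_{t_i}^{t_{i+1}} ρ) = (Φ_s(g(t_i)) - Φ_s(g(t_{i+1}))) / Φ_s(g(t_i))`. -/
theorem discrete_opacity_formula (s ti ti1 : ℝ) (hs : 0 < s) (hlt : ti < ti1)
    (g g' : ℝ → ℝ) (hg : ∀ t, HasDerivAt g (g' t) t) (hg' : Continuous g')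
    (hdec : ∀ t ∈ Set.Icc ti ti1, g' t < 0) :
    1 - Real.exp (-(∫ t in ti..ti1, -g' t * phi s (g t) / Phi s (g t)))
      = (Phi s (g ti) - Phi s (g ti1)) / Phi s (g ti) :=
  discrete_opacity_formula_general s ti ti1 g g' hg hg'
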